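/- Let P and Q be probability measures on a measurable space with midpoint mixture M = (1/2)(P + Q). If KL(P ‖ M) + KL(Q ‖ M) = 2·log 2 (i.e. the Jensen–Shannon divergence attains its maximal value log 2), then P and Q are mutually singular. -/

import Mathlib

/-!
With `M = (P + Q) / 2` one has `dP/dM = 2 / (1 + dQ/dP)` `P`-a.e., so `log (dP/dM) ≤ log 2`, with
equality exactly where `dQ/dP = 0`. Hence `KL(P ‖ M)` and `KL(Q ‖ M)` are both at most `log 2`, and
if their sum is `2 log 2` then `KL(P ‖ M) = log 2`, which forces `dQ/dP = 0` `P`-a.e., i.e. `Q ⟂ P`.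
-/

open MeasureTheory Real
open scoped ENNReal Classical

/-- Kullback–Leibler divergence: `∫ log (dP/dQ) dP` if `P ≪ Q`, and `+∞` otherwise. -/
noncomputable def klDiv {α : Type*} [MeasurableSpace α] (P Q : Measure α) : EReal :=
  if P ≪ Q then ((∫ x, Real.log ((P.rnDeriv Q) x).toReal ∂P : ℝ) : EReal) else ⊤

lemma EReal.eq_of_add_eq_two_mul_of_le {a b : EReal} {c : ℝ} (ha : a ≤ c) (hb : b ≤ c)
    (h : a + b = ((2 * c : ℝ) : EReal)) : a = c := by
  induction a using EReal.rec <;> induction b using EReal.rec <;> simp_all [-EReal.coe_mul]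
  norm_cast at h
  linarith

lemma Real.eq_zero_of_log_one_add_eq_zero {t : ℝ} (ht : 0 ≤ t) (h : log (1 + t) = 0) : t = 0 := by
  by_contra hne
  exact (log_pos (by linarith [ht.lt_of_ne (Ne.symm hne)])).ne' h

section ProbabilityIntegral

variable {α : Type*} [MeasurableSpace α] {μ : Measure α} [IsProbabilityMeasure μ]
  {f : α → ℝ} {c : ℝ}

lemma integral_le_of_ae_le_of_nonneg (hc : 0 ≤ c) (hf : ∀ᵐ x ∂μ, f x ≤ c) :
    ∫ x, f x ∂μ ≤ c := by
  by_cases hint : Integrable f μ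
  · simpa using integral_mono_ae hint (integrable_const c) hf
  · rwa [integral_undef hint]

lemma ae_eq_of_integral_eq_of_ae_le (hc : c ≠ 0) (hf : ∀ᵐ x ∂μ, f x ≤ c)
    (h : ∫ x, f x ∂μ = c) : ∀ᵐ x ∂μ, f x = c := by
  -- a non-integrable `f` would have integral `0`
  have hint : Integrable f μ := by
    by_contra hint
    exact hc (by rw [← h, integral_undef hint])
  refine (integral_eq_iff_of_ae_le hint (integrable_const c) hf).mp ?_
  simpa using h

end ProbabilityIntegral

section Midpoint

variable {α : Type*} [MeasurableSpace α] (P Q : Measure α)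

lemma absolutelyContinuous_midpoint : P ≪ (2⁻¹ : ℝ≥0∞) • (P + Q) :=
  (Measure.AbsolutelyContinuous.rfl.add_right Q).smul_right (by norm_num)

variable [SigmaFinite P] [SigmaFinite Q]

lemma rnDeriv_midpoint_ae_eq :
    P.rnDeriv ((2⁻¹ : ℝ≥0∞) • (P + Q)) =ᵐ[P] fun x ↦ 2 * (Q.rnDeriv P x + 1)⁻¹ := by
  have hP : P ≪ P + Q := Measure.AbsolutelyContinuous.rfl.add_right Q
  filter_upwards [hP.ae_le (Measure.rnDeriv_smul_right_of_ne_top' P (P + Q) (r := 2⁻¹)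
      (by norm_num) (by norm_num)), add_comm P Q ▸ Measure.rnDeriv_add_self P Q] with x h1 h2
  rw [h1, Pi.smul_apply, h2, inv_inv, smul_eq_mul]

lemma log_rnDeriv_midpoint_ae_eq :
    (fun x ↦ log (P.rnDeriv ((2⁻¹ : ℝ≥0∞) • (P + Q)) x).toReal) =ᵐ[P]
      fun x ↦ log 2 - log (1 + (Q.rnDeriv P x).toReal) := by
  filter_upwards [rnDeriv_midpoint_ae_eq P Q, Measure.rnDeriv_lt_top Q P] with x hx hfin
  rw [hx, ENNReal.toReal_mul, ENNReal.toReal_inv, ENNReal.toReal_add hfin.ne (by simp),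
    ← div_eq_mul_inv, add_comm, ENNReal.toReal_ofNat, ENNReal.toReal_one,
    log_div (by norm_num) (by positivity)]

lemma log_rnDeriv_midpoint_ae_le :
    ∀ᵐ x ∂P, log (P.rnDeriv ((2⁻¹ : ℝ≥0∞) • (P + Q)) x).toReal ≤ log 2 := by
  filter_upwards [log_rnDeriv_midpoint_ae_eq P Q] with x hx
  rw [hx, sub_le_self_iff]
  exact log_nonneg (by simp)

lemma klDiv_midpoint_le_log_two [IsProbabilityMeasure P] :
    klDiv P ((2⁻¹ : ℝ≥0∞) • (P + Q)) ≤ (log 2 : ℝ) := by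
  rw [klDiv, if_pos (absolutelyContinuous_midpoint P Q), EReal.coe_le_coe_iff]
  exact integral_le_of_ae_le_of_nonneg (log_nonneg one_le_two) (log_rnDeriv_midpoint_ae_le P Q)

lemma mutuallySingular_of_klDiv_midpoint_eq_log_two [IsProbabilityMeasure P]
    (h : klDiv P ((2⁻¹ : ℝ≥0∞) • (P + Q)) = (log 2 : ℝ)) : P ⟂ₘ Q := by
  rw [klDiv, if_pos (absolutelyContinuous_midpoint P Q), EReal.coe_eq_coe_iff] at h
  have hlog := ae_eq_of_integral_eq_of_ae_le (log_pos one_lt_two).ne'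
    (log_rnDeriv_midpoint_ae_le P Q) h
  refine ((Measure.rnDeriv_eq_zero Q P).mp ?_).symm
  filter_upwards [hlog, log_rnDeriv_midpoint_ae_eq P Q, Measure.rnDeriv_lt_top Q P]
    with x hconst hformula hfin
  have hzero : (Q.rnDeriv P x).toReal = 0 :=
    Real.eq_zero_of_log_one_add_eq_zero ENNReal.toReal_nonneg (by linarith)
  exact (ENNReal.toReal_eq_zero_iff _).mp hzero |>.resolve_right hfin.ne

end Midpoint

theorem mutuallySingular_of_kl_midpoint_sum_eq_two_log_two {α : Type*} [MeasurableSpace α]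
    (P Q : Measure α) [IsProbabilityMeasure P] [IsProbabilityMeasure Q]
    (M : Measure α) (hM : M = (2⁻¹ : ℝ≥0∞) • (P + Q))
    (h : klDiv P M + klDiv Q M = ((2 * Real.log 2 : ℝ) : EReal)) :
    P ⟂ₘ Q := by
  subst hM
  have hQ : klDiv Q ((2⁻¹ : ℝ≥0∞) • (P + Q)) ≤ (log 2 : ℝ) := by
    simpa only [add_comm Q P] using klDiv_midpoint_le_log_two Q P
  exact mutuallySingular_of_klDiv_midpoint_eq_log_two P Q
    (EReal.eq_of_add_eq_two_mul_of_le (klDiv_midpoint_le_log_two P Q) hQ h)
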